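/- Let R be a solid invertible (d+1)×(d+1) matrix over F. Then the transpose of R is diagonally equivalent to R^{-1} if and only if there exists an invertible matrix K such that the antiautomorphism A ↦ K A^t K^{-1} of the matrix algebra fixes Δ_{ii} and fixes R Δ_{ii} R^{-1} for all 0 ≤ i ≤ d. -/

import Mathlib

open Matrix

/-- An invertible matrix is *solid* whenever all entries in row 0 and column 0
of both the matrix and its inverse are nonzero. -/
def Solid {F : Type} [Field F] {d : ℕ} (R : Matrix (Fin (d+1)) (Fin (d+1)) F) : Prop :=
  IsUnit R ∧ (∀ i, R i 0 ≠ 0) ∧ (∀ j, R 0 j ≠ 0) ∧ (∀ i, R⁻¹ i 0 ≠ 0) ∧ (∀ j, R⁻¹ 0 j ≠ 0)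

/-- Matrices `S`, `T` are *diagonally equivalent* whenever `T = H * S * K` for some
invertible diagonal matrices `H`, `K`. -/
def DiagEquiv {F : Type} [Field F] {d : ℕ} (S T : Matrix (Fin (d+1)) (Fin (d+1)) F) : Prop :=
  ∃ H K : Matrix (Fin (d+1)) (Fin (d+1)) F,
    H.IsDiag ∧ IsUnit H ∧ K.IsDiag ∧ IsUnit K ∧ T = H * S * K

/-- A matrix is *normalized* whenever all entries of its column 0 equal 1, and all
entries of column 0 of its inverse are equal to each other. -/
def Normalized {F : Type} [Field F] {d : ℕ} (S : Matrix (Fin (d+1)) (Fin (d+1)) F) : Prop :=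
  (∀ i, S i 0 = 1) ∧ (∀ i, S⁻¹ i 0 = S⁻¹ 0 0)

/-! With `M = R⁻¹ K (Rᵀ)⁻¹`, the antiautomorphism `A ↦ K Aᵀ K⁻¹` maps `R Δᵢᵢ R⁻¹` to
`R (M Δᵢᵢ M⁻¹) R⁻¹`. So it fixes every `Δᵢᵢ` iff `K` commutes with all of them, i.e. `K` is
diagonal, and it fixes every `R Δᵢᵢ R⁻¹` iff `M` is diagonal. On the other side,
`Rᵀ = H R⁻¹ K` with `H`, `K` diagonal says exactly that `M = H⁻¹`. Both conditions therefore
say that `R⁻¹ K (Rᵀ)⁻¹` is diagonal for some invertible diagonal `K`. -/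

namespace Matrix

variable {n α : Type*} [Fintype n] [DecidableEq n] [CommRing α]

theorem isDiag_iff_forall_commute_single {M : Matrix n n α} :
    M.IsDiag ↔ ∀ i, Commute M (single i i 1) := by
  refine ⟨fun hM i => ?_, fun hM a b hab => col_eq_zero_of_commute_single (hM b).symm hab⟩
  rw [← hM.diagonal_diag, ← diagonal_single]
  exact commute_diagonal _ _

theorem conj_eq_iff_commute {M E : Matrix n n α} (hM : IsUnit M) :
    M * E * M⁻¹ = E ↔ Commute M E := by
  obtain ⟨u, rfl⟩ := hM
  rw [← coe_units_inv, Units.mul_inv_eq_iff_eq_mul]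
  exact (commute_iff_eq _ _).symm

theorem conj_inj {R X Y : Matrix n n α} (hR : IsUnit R) :
    R * X * R⁻¹ = R * Y * R⁻¹ ↔ X = Y := by
  obtain ⟨u, rfl⟩ := hR
  rw [← coe_units_inv, Units.mul_left_inj, Units.mul_right_inj]

theorem IsDiag.nonsing_inv {M : Matrix n n α} (hM : M.IsDiag) : M⁻¹.IsDiag := by
  rw [← hM.diagonal_diag, inv_diagonal]
  exact isDiag_diagonal _

theorem inv_mul_mul_transpose_inv_inv {R : Matrix n n α} (hR : IsUnit R) (K : Matrix n n α) :
    (R⁻¹ * K * Rᵀ⁻¹)⁻¹ = Rᵀ * K⁻¹ * R := by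
  have hR' := (isUnit_iff_isUnit_det R).mp hR
  rw [mul_inv_rev, mul_inv_rev, nonsing_inv_nonsing_inv _ hR',
    nonsing_inv_nonsing_inv _ (isUnit_det_transpose _ hR'), Matrix.mul_assoc]

theorem isUnit_inv_mul_mul_transpose_inv {R K : Matrix n n α} (hR : IsUnit R) (hK : IsUnit K) :
    IsUnit (R⁻¹ * K * Rᵀ⁻¹) :=
  ((isUnit_nonsing_inv_iff.mpr hR).mul hK).mul
    (isUnit_nonsing_inv_iff.mpr ((isUnit_transpose _).mpr hR))

theorem transpose_conj_eq_iff_commute {K R E : Matrix n n α} (hK : IsUnit K) (hR : IsUnit R)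
    (hE : Eᵀ = E) :
    K * (R * E * R⁻¹)ᵀ * K⁻¹ = R * E * R⁻¹ ↔ Commute (R⁻¹ * K * Rᵀ⁻¹) E := by
  have hR' := (isUnit_iff_isUnit_det R).mp hR
  have hconj : K * (R * E * R⁻¹)ᵀ * K⁻¹
      = R * ((R⁻¹ * K * Rᵀ⁻¹) * E * (R⁻¹ * K * Rᵀ⁻¹)⁻¹) * R⁻¹ := by
    rw [inv_mul_mul_transpose_inv_inv hR, transpose_mul, transpose_mul, hE, transpose_nonsing_inv]
    simp only [Matrix.mul_assoc, mul_nonsing_inv_cancel_left _ _ hR', mul_nonsing_inv _ hR',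
      Matrix.mul_one]
  rw [hconj, conj_inj hR, conj_eq_iff_commute (isUnit_inv_mul_mul_transpose_inv hR hK)]

theorem conj_transpose_single_eq_iff_isDiag {K : Matrix n n α} (hK : IsUnit K) :
    (∀ i, K * (single i i (1 : α))ᵀ * K⁻¹ = single i i 1) ↔ K.IsDiag := by
  simp_rw [transpose_single, conj_eq_iff_commute hK, isDiag_iff_forall_commute_single]

end Matrix

theorem diagEquiv_inv_transpose_iff {F : Type} [Field F] {d : ℕ}
    {R : Matrix (Fin (d+1)) (Fin (d+1)) F} (hR : IsUnit R) :
    DiagEquiv R⁻¹ Rᵀ ↔ ∃ K, IsUnit K ∧ K.IsDiag ∧ (R⁻¹ * K * Rᵀ⁻¹).IsDiag := by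
  have hR' := (isUnit_iff_isUnit_det R).mp hR
  constructor
  · rintro ⟨H, K, hH, -, hK, hKu, hRT⟩
    have hM : R⁻¹ * K * Rᵀ⁻¹ = H⁻¹ := by
      rw [hRT, Matrix.mul_inv_rev, Matrix.mul_inv_rev, nonsing_inv_nonsing_inv _ hR']
      simp only [Matrix.mul_assoc, nonsing_inv_mul_cancel_left _ _ hR',
        mul_nonsing_inv_cancel_left _ _ ((isUnit_iff_isUnit_det K).mp hKu)]
    exact ⟨K, hKu, hK, hM ▸ hH.nonsing_inv⟩
  · rintro ⟨K, hKu, hK, hM⟩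
    refine ⟨(R⁻¹ * K * Rᵀ⁻¹)⁻¹, K, hM.nonsing_inv, ?_, hK, hKu, ?_⟩
    · exact isUnit_nonsing_inv_iff.mpr (isUnit_inv_mul_mul_transpose_inv hR hKu)
    · rw [inv_mul_mul_transpose_inv_inv hR]
      simp only [Matrix.mul_assoc, mul_nonsing_inv_cancel_left _ _ hR',
        nonsing_inv_mul _ ((isUnit_iff_isUnit_det K).mp hKu), Matrix.mul_one]

theorem stmt9 {F : Type} [Field F] (d : ℕ)
    (R : Matrix (Fin (d+1)) (Fin (d+1)) F) (hR : Solid R) :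
    DiagEquiv R⁻¹ Rᵀ ↔
      ∃ K : Matrix (Fin (d+1)) (Fin (d+1)) F, IsUnit K ∧
        ∀ i : Fin (d+1),
          K * (single i i 1 : Matrix (Fin (d+1)) (Fin (d+1)) F)ᵀ * K⁻¹
            = single i i 1 ∧
          K * (R * single i i 1 * R⁻¹)ᵀ * K⁻¹
            = R * single i i 1 * R⁻¹ := by
  rw [diagEquiv_inv_transpose_iff hR.1]
  refine exists_congr fun K => and_congr_right fun hK => ?_
  simp_rw [forall_and, conj_transpose_single_eq_iff_isDiag hK,
    transpose_conj_eq_iff_commute hK hR.1 (transpose_single _ _ _),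
    ← isDiag_iff_forall_commute_single]
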